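/- Let p be a prime, R a commutative ring of characteristic p, W ⊆ R a submonoid, and M an R-module. Write F_*N for an R-module N regarded as an R-module via restriction of scalars along the Frobenius (so r acts on F_*N as multiplication by r^p). Then the canonical map F_*M → F_*(W⁻¹M), m ↦ m/1, exhibits F_*(W⁻¹M) as the localization of the R-module F_*M at W: every w ∈ W acts invertibly on F_*(W⁻¹M), and the induced map W⁻¹(F_*M) → F_*(W⁻¹M) is an isomorphism. In other words, Frobenius pushforward of modules commutes with localization. -/

import Mathlib

/-!
STATEMENT 14: Let `p` be a prime, `R` a commutative ring of characteristic `p`,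
`W ⊆ R` a submonoid and `M` an `R`-module. Writing `F_* N` for `N` with the
`R`-action restricted along the Frobenius (`r` acts as multiplication by `r ^ p`),
the canonical map `F_* M → F_* (W⁻¹ M)`, `m ↦ m/1`, exhibits `F_* (W⁻¹ M)` as the
localization of `F_* M` at `W`: every `w ∈ W` acts invertibly on `F_* (W⁻¹ M)` and
the induced map `W⁻¹ (F_* M) → F_* (W⁻¹ M)` is an isomorphism; i.e. Frobenius
pushforward commutes with localization.
-/

universe u v

/-- `F_* N`: the module `N` with `R`-action restricted along the Frobenius of `R`. -/
def FrobPush (p : ℕ) (R : Type u) (N : Type v) : Type v := N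

instance (p : ℕ) (R : Type u) (N : Type v) [AddCommGroup N] :
    AddCommGroup (FrobPush p R N) :=
  inferInstanceAs (AddCommGroup N)

/-- The `R`-module structure on `F_* N`: `r` acts as multiplication by `r ^ p`. -/
instance (p : ℕ) (R : Type u) (N : Type v) [CommRing R] [Fact p.Prime] [CharP R p]
    [AddCommGroup N] [Module R N] : Module R (FrobPush p R N) :=
  Module.compHom N (frobenius R p)

variable (p : ℕ) (R : Type u) [CommRing R] [Fact p.Prime] [CharP R p]
  (W : Submonoid R) (M : Type u) [AddCommGroup M] [Module R M]

/-- The canonical map `F_* M →ₗ[R] F_* (W⁻¹ M)`, `m ↦ m/1`. -/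
noncomputable def frobPushMk : FrobPush p R M →ₗ[R] FrobPush p R (LocalizedModule W M) where
  toFun := LocalizedModule.mkLinearMap W M
  map_add' x y := (LocalizedModule.mkLinearMap W M).map_add x y
  map_smul' r m := (LocalizedModule.mkLinearMap W M).map_smul (frobenius R p r) m

/-!
On `F_* N` an element `w` acts as `w ^ p`, which again lies in `W` and is a multiple of `w`.
Hence the three defining properties of a localization map pass from `f` to `F_* f`:
`w ^ p` invertible makes `w` invertible, `s • y = f m` gives `s ^ p • y = f (s ^ (p - 1) • m)`,
and `c • m₁ = c • m₂` gives `c ^ p • m₁ = c ^ p • m₂`. Applied to `m ↦ m / 1`, the induced map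
`W⁻¹ (F_* M) → F_* (W⁻¹ M)` is then the comparison isomorphism between two localizations.
-/

namespace FrobPush

variable {p : ℕ} {R : Type u} {N N' : Type*}

def of (x : N) : FrobPush p R N := x

theorem of_surjective : Function.Surjective (of : N → FrobPush p R N) := fun x => ⟨x, rfl⟩

variable [CommRing R] [Fact p.Prime] [CharP R p]
  [AddCommGroup N] [Module R N] [AddCommGroup N'] [Module R N']

theorem smul_of (r : R) (x : N) : r • (of x : FrobPush p R N) = of (r ^ p • x) := rfl

def map (f : N →ₗ[R] N') : FrobPush p R N →ₗ[R] FrobPush p R N' where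
  toFun := f
  map_add' := f.map_add
  map_smul' r := f.map_smul (frobenius R p r)

theorem map_of (f : N →ₗ[R] N') (x : N) : map f (of x : FrobPush p R N) = of (f x) := rfl

theorem isUnit_algebraMap_end_iff (r : R) :
    IsUnit (algebraMap R (Module.End R (FrobPush p R N)) r) ↔
      IsUnit (algebraMap R (Module.End R N) (r ^ p)) := by
  rw [Module.End.isUnit_iff, Module.End.isUnit_iff]
  rfl

theorem isLocalizedModule_map (W : Submonoid R) (f : N →ₗ[R] N') [IsLocalizedModule W f] :
    IsLocalizedModule W (map (p := p) f) where
  map_units w := (isUnit_algebraMap_end_iff (w : R)).mpr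
    (IsLocalizedModule.map_units f ⟨_, pow_mem w.2 p⟩)
  surj y := by
    obtain ⟨y, rfl⟩ := of_surjective y
    obtain ⟨⟨m, s⟩, hs⟩ := IsLocalizedModule.surj W f y
    refine ⟨⟨of ((s : R) ^ (p - 1) • m), s⟩, ?_⟩
    dsimp only at hs ⊢
    rw [Submonoid.smul_def] at hs ⊢
    rw [smul_of, map_of, map_smul, ← hs, smul_smul, ← pow_succ,
      Nat.sub_add_cancel (Fact.out : p.Prime).pos]
  exists_of_eq {m₁ m₂} h := by
    obtain ⟨n₁, rfl⟩ := of_surjective m₁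
    obtain ⟨n₂, rfl⟩ := of_surjective m₂
    obtain ⟨c, hc⟩ := IsLocalizedModule.exists_of_eq (S := W) (f := f) (x₁ := n₁) (x₂ := n₂) h
    refine ⟨c, ?_⟩
    simp only [Submonoid.smul_def] at hc ⊢
    rw [smul_of, smul_of, ← Nat.sub_add_cancel (Fact.out : p.Prime).pos, pow_succ, mul_smul,
      mul_smul, hc]

end FrobPush

theorem frobPushMk_eq_map : frobPushMk p R W M = FrobPush.map (LocalizedModule.mkLinearMap W M) :=
  rfl

theorem frobPush_commutes_with_localization :
    (∃ h : ∀ w : W, IsUnit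
        (algebraMap R (Module.End R (FrobPush p R (LocalizedModule W M))) w),
      Function.Bijective (LocalizedModule.lift W (frobPushMk p R W M) h)) ∧
    IsLocalizedModule W (frobPushMk p R W M) := by
  have hloc : IsLocalizedModule W (frobPushMk p R W M) := by
    rw [frobPushMk_eq_map]
    exact FrobPush.isLocalizedModule_map W _
  -- `IsLocalizedModule.iso` is this `LocalizedModule.lift` up to unfolding.
  exact ⟨⟨hloc.map_units, (IsLocalizedModule.iso W (frobPushMk p R W M)).bijective⟩, hloc⟩
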